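/- arXiv:2103.12158 — 6 statements merged into one kernel-verified Lean document; each statement's English description precedes it below -/
import Mathlib

section
/- Let S and A be nonempty finite sets, β ∈ [0,1), let c₁, c₂ : S × A → ℝ be two cost functions and P₁, P₂ : S × A → (S → ℝ) two transition kernels, and let V₁, V₂ : S → ℝ be the respective solutions of the Bellman optimality equations V_i(s) = min_a ( c_i(s,a) + β ∑_{s'} P_i(s,a)(s') V_i(s') ). Suppose there are ε_c, ε_P ≥ 0 with |c₁(s,a) − c₂(s,a)| ≤ ε_c and ∑_{s'} |P₁(s,a)(s') − P₂(s,a)(s')| ≤ ε_P for all (s,a). Then ‖V₁ − V₂‖∞ ≤ (ε_c + β ε_P ‖V₂‖∞) / (1 − β). In particular, if ε_c = ‖c‖∞·L, ε_P = L and ‖V₂‖∞ ≤ ‖c‖∞/(1−β), then ‖V₁ − V₂‖∞ ≤ ‖c‖∞ · L / (1 − β)². -/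
open scoped BigOperators

lemma abs_ciInf_sub_ciInf_aux {A : Type*} [Fintype A] [Nonempty A]
    (f g : A → ℝ) (K : ℝ) (h : ∀ a, |f a - g a| ≤ K) :
    |(⨅ a, f a) - ⨅ a, g a| ≤ K := by
  have bddf : BddBelow (Set.range f) := (Set.finite_range f).bddBelow
  have bddg : BddBelow (Set.range g) := (Set.finite_range g).bddBelow
  rw [abs_sub_le_iff]
  constructor
  · obtain ⟨a₀, ha₀⟩ := Finite.exists_min g
    have hg : (⨅ a, g a) = g a₀ := le_antisymm (ciInf_le bddg a₀) (le_ciInf ha₀)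
    have : (⨅ a, f a) ≤ f a₀ := ciInf_le bddf a₀
    have := abs_le.1 (h a₀)
    rw [hg]; linarith
  · obtain ⟨a₀, ha₀⟩ := Finite.exists_min f
    have hf : (⨅ a, f a) = f a₀ := le_antisymm (ciInf_le bddf a₀) (le_ciInf ha₀)
    have : (⨅ a, g a) ≤ g a₀ := ciInf_le bddg a₀
    have := abs_le.1 (h a₀)
    rw [hf]; linarith

/-- Finite-space core of Theorem 2 (cont_bound): the optimal value functions of
two models whose costs differ by at most `ε_c` and whose transition kernels
differ by at most `ε_P` in total variation satisfy
`‖V₁ - V₂‖∞ ≤ (ε_c + β ε_P ‖V₂‖∞)/(1-β)`; in particular, with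
`ε_c = ‖c‖∞ L`, `ε_P = L` and `‖V₂‖∞ ≤ ‖c‖∞/(1-β)`, one obtains
`‖V₁ - V₂‖∞ ≤ ‖c‖∞ L / (1-β)²`. -/
theorem optimal_value_difference_bound
    {S A : Type*} [Fintype S] [Fintype A] [Nonempty S] [Nonempty A]
    (β : ℝ) (hβ0 : 0 ≤ β) (hβ1 : β < 1)
    (c₁ c₂ : S → A → ℝ) (P₁ P₂ : S → A → S → ℝ)
    (hP₁0 : ∀ s a s', 0 ≤ P₁ s a s') (hP₁1 : ∀ s a, ∑ s', P₁ s a s' = 1)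
    (hP₂0 : ∀ s a s', 0 ≤ P₂ s a s') (hP₂1 : ∀ s a, ∑ s', P₂ s a s' = 1)
    (V₁ V₂ : S → ℝ)
    (hV₁ : ∀ s, V₁ s = ⨅ a, (c₁ s a + β * ∑ s', P₁ s a s' * V₁ s'))
    (hV₂ : ∀ s, V₂ s = ⨅ a, (c₂ s a + β * ∑ s', P₂ s a s' * V₂ s'))
    (εc εP : ℝ) (hεc0 : 0 ≤ εc) (hεP0 : 0 ≤ εP)
    (hc : ∀ s a, |c₁ s a - c₂ s a| ≤ εc)
    (hP : ∀ s a, ∑ s', |P₁ s a s' - P₂ s a s'| ≤ εP) :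
    ‖V₁ - V₂‖ ≤ (εc + β * εP * ‖V₂‖) / (1 - β) ∧
    (∀ cnorm L : ℝ, 0 ≤ L → 0 ≤ cnorm → εc = cnorm * L → εP = L →
      ‖V₂‖ ≤ cnorm / (1 - β) → ‖V₁ - V₂‖ ≤ cnorm * L / (1 - β) ^ 2) := by
  set D := ‖V₁ - V₂‖ with hD
  set M := ‖V₂‖ with hM
  have hD0 : 0 ≤ D := norm_nonneg _
  have hM0 : 0 ≤ M := norm_nonneg _
  have h1β : 0 < 1 - β := by linarith
  have hDs : ∀ s, |V₁ s - V₂ s| ≤ D := by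
    intro s
    have := norm_le_pi_norm (V₁ - V₂) s
    simpa [Real.norm_eq_abs] using this
  have hMs : ∀ s, |V₂ s| ≤ M := by
    intro s
    have := norm_le_pi_norm V₂ s
    simpa [Real.norm_eq_abs] using this
  -- per-(s,a) bound
  have key : ∀ s, |V₁ s - V₂ s| ≤ εc + β * εP * M + β * D := by
    intro s
    rw [hV₁ s, hV₂ s]
    apply abs_ciInf_sub_ciInf_aux
    intro a
    have hsum1 : |∑ s', P₁ s a s' * (V₁ s' - V₂ s')| ≤ D := by
      calc |∑ s', P₁ s a s' * (V₁ s' - V₂ s')|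
          ≤ ∑ s', |P₁ s a s' * (V₁ s' - V₂ s')| := Finset.abs_sum_le_sum_abs _ _
        _ ≤ ∑ s', P₁ s a s' * D := by
            apply Finset.sum_le_sum
            intro s' _
            rw [abs_mul, abs_of_nonneg (hP₁0 s a s')]
            exact mul_le_mul_of_nonneg_left (hDs s') (hP₁0 s a s')
        _ = D := by rw [← Finset.sum_mul, hP₁1 s a, one_mul]
    have hsum2 : |∑ s', (P₁ s a s' - P₂ s a s') * V₂ s'| ≤ εP * M := by
      calc |∑ s', (P₁ s a s' - P₂ s a s') * V₂ s'|
          ≤ ∑ s', |(P₁ s a s' - P₂ s a s') * V₂ s'| := Finset.abs_sum_le_sum_abs _ _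
        _ ≤ ∑ s', |P₁ s a s' - P₂ s a s'| * M := by
            apply Finset.sum_le_sum
            intro s' _
            rw [abs_mul]
            exact mul_le_mul_of_nonneg_left (hMs s') (abs_nonneg _)
        _ ≤ εP * M := by
            rw [← Finset.sum_mul]
            exact mul_le_mul_of_nonneg_right (hP s a) hM0
    have hdec : (c₁ s a + β * ∑ s', P₁ s a s' * V₁ s')
        - (c₂ s a + β * ∑ s', P₂ s a s' * V₂ s')
        = (c₁ s a - c₂ s a)
          + β * ((∑ s', P₁ s a s' * (V₁ s' - V₂ s'))
            + ∑ s', (P₁ s a s' - P₂ s a s') * V₂ s') := by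
      rw [← Finset.sum_add_distrib]
      have h : ∑ s', (P₁ s a s' * (V₁ s' - V₂ s') + (P₁ s a s' - P₂ s a s') * V₂ s')
          = ∑ s', (P₁ s a s' * V₁ s' - P₂ s a s' * V₂ s') :=
        Finset.sum_congr rfl (fun s' _ => by ring)
      rw [h, Finset.sum_sub_distrib]
      ring
    rw [hdec]
    calc |(c₁ s a - c₂ s a) + β * ((∑ s', P₁ s a s' * (V₁ s' - V₂ s'))
            + ∑ s', (P₁ s a s' - P₂ s a s') * V₂ s')|
        ≤ |c₁ s a - c₂ s a| + β * (|∑ s', P₁ s a s' * (V₁ s' - V₂ s')|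
            + |∑ s', (P₁ s a s' - P₂ s a s') * V₂ s'|) := by
          refine (abs_add_le _ _).trans ?_
          gcongr
          rw [abs_mul, abs_of_nonneg hβ0]
          gcongr
          exact abs_add_le _ _
      _ ≤ εc + β * (D + εP * M) := by
          gcongr
          exact hc s a
      _ = εc + β * εP * M + β * D := by ring
  have hDle : D ≤ εc + β * εP * M + β * D := by
    have : D ≤ εc + β * εP * M + β * D := by
      rw [hD]
      apply pi_norm_le_iff_of_nonneg (by positivity) |>.2
      intro s
      simpa [Real.norm_eq_abs] using key s
    exact this
  have main : D ≤ (εc + β * εP * M) / (1 - β) := by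
    rw [le_div_iff₀ h1β]
    nlinarith
  refine ⟨main, ?_⟩
  intro cnorm L hL0 hcn0 hεc hεP hMle
  refine main.trans ?_
  rw [hεc, hεP, div_le_div_iff₀ h1β (by positivity)]
  have h2 : M * (1 - β) ≤ cnorm := by
    rw [← le_div_iff₀ h1β] at *
    exact hMle
  nlinarith [mul_le_mul_of_nonneg_left h2 (mul_nonneg (mul_nonneg hβ0 hL0) h1β.le)]
end

section
/- Let S and A be nonempty finite sets, β ∈ [0,1), let c₁, c₂ : S × A → ℝ be two cost functions and P₁, P₂ : S × A → (S → ℝ) two transition kernels, and let V₂ : S → ℝ solve the Bellman optimality equation V₂(s) = min_a ( c₂(s,a) + β ∑_{s'} P₂(s,a)(s') V₂(s') ). Let φ : S → A be a policy attaining this minimum, i.e., V₂(s) = c₂(s,φ(s)) + β ∑_{s'} P₂(s,φ(s))(s') V₂(s') for all s, and let V₁^φ : S → ℝ be the unique solution of V₁^φ(s) = c₁(s,φ(s)) + β ∑_{s'} P₁(s,φ(s))(s') V₁^φ(s'). Suppose there are ε_c, ε_P ≥ 0 with |c₁(s,a) − c₂(s,a)| ≤ ε_c and ∑_{s'} |P₁(s,a)(s')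 − P₂(s,a)(s')| ≤ ε_P for all (s,a). Then ‖V₁^φ − V₂‖∞ ≤ (ε_c + β ε_P ‖V₂‖∞) / (1 − β). -/
open scoped BigOperators

/-- Intermediate bound (mid_bound) in the proof of Theorem 3: the value, in
model 1, of the optimal policy `φ` of model 2 is close to the optimal value of
model 2. -/
theorem approximate_policy_value_bound
    {S A : Type*} [Fintype S] [Fintype A] [Nonempty S] [Nonempty A]
    (β : ℝ) (hβ0 : 0 ≤ β) (hβ1 : β < 1)
    (c₁ c₂ : S → A → ℝ) (P₁ P₂ : S → A → S → ℝ)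
    (hP₁0 : ∀ s a s', 0 ≤ P₁ s a s') (hP₁1 : ∀ s a, ∑ s', P₁ s a s' = 1)
    (hP₂0 : ∀ s a s', 0 ≤ P₂ s a s') (hP₂1 : ∀ s a, ∑ s', P₂ s a s' = 1)
    (V₂ : S → ℝ)
    (hV₂ : ∀ s, V₂ s = ⨅ a, (c₂ s a + β * ∑ s', P₂ s a s' * V₂ s'))
    (φ : S → A)
    (hφ : ∀ s, V₂ s = c₂ s (φ s) + β * ∑ s', P₂ s (φ s) s' * V₂ s')
    (V₁φ : S → ℝ)
    (hV₁φ : ∀ s, V₁φ s = c₁ s (φ s) + β * ∑ s', P₁ s (φ s) s' * V₁φ s')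
    (εc εP : ℝ) (hεc0 : 0 ≤ εc) (hεP0 : 0 ≤ εP)
    (hc : ∀ s a, |c₁ s a - c₂ s a| ≤ εc)
    (hP : ∀ s a, ∑ s', |P₁ s a s' - P₂ s a s'| ≤ εP) :
    ‖V₁φ - V₂‖ ≤ (εc + β * εP * ‖V₂‖) / (1 - β) := by
  set f : S → ℝ := V₁φ - V₂ with hf
  set D : ℝ := ‖f‖ with hD
  have hD0 : 0 ≤ D := norm_nonneg _
  have hV₂n : 0 ≤ ‖V₂‖ := norm_nonneg _
  have hKey : D ≤ εc + β * εP * ‖V₂‖ + β * D := by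
    have hle : ∀ s, ‖f s‖ ≤ εc + β * εP * ‖V₂‖ + β * D := by
      intro s
      have hfs : f s = (c₁ s (φ s) - c₂ s (φ s))
          + β * (∑ s', (P₁ s (φ s) s' - P₂ s (φ s) s') * V₂ s')
          + β * (∑ s', P₁ s (φ s) s' * f s') := by
        simp only [hf, Pi.sub_apply]
        rw [hV₁φ s, hφ s]
        simp only [sub_mul, mul_sub, Finset.sum_sub_distrib]
        ring
      have h1 : |c₁ s (φ s) - c₂ s (φ s)| ≤ εc := hc s (φ s)
      have h2 : |∑ s', (P₁ s (φ s) s' - P₂ s (φ s) s') * V₂ s'| ≤ εP * ‖V₂‖ := by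
        calc |∑ s', (P₁ s (φ s) s' - P₂ s (φ s) s') * V₂ s'|
            ≤ ∑ s', |(P₁ s (φ s) s' - P₂ s (φ s) s') * V₂ s'| :=
              Finset.abs_sum_le_sum_abs _ _
          _ ≤ ∑ s', |P₁ s (φ s) s' - P₂ s (φ s) s'| * ‖V₂‖ := by
              apply Finset.sum_le_sum
              intro i _
              rw [abs_mul]
              exact mul_le_mul_of_nonneg_left (norm_le_pi_norm V₂ i) (abs_nonneg _)
          _ = (∑ s', |P₁ s (φ s) s' - P₂ s (φ s) s'|) * ‖V₂‖ := by
              rw [Finset.sum_mul]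
          _ ≤ εP * ‖V₂‖ := mul_le_mul_of_nonneg_right (hP s (φ s)) hV₂n
      have h3 : |∑ s', P₁ s (φ s) s' * f s'| ≤ D := by
        calc |∑ s', P₁ s (φ s) s' * f s'|
            ≤ ∑ s', |P₁ s (φ s) s' * f s'| := Finset.abs_sum_le_sum_abs _ _
          _ ≤ ∑ s', P₁ s (φ s) s' * D := by
              apply Finset.sum_le_sum
              intro i _
              rw [abs_mul, abs_of_nonneg (hP₁0 s (φ s) i)]
              exact mul_le_mul_of_nonneg_left (norm_le_pi_norm f i)
                (hP₁0 s (φ s) i)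
          _ = D := by rw [← Finset.sum_mul, hP₁1 s (φ s), one_mul]
      have : ‖f s‖ = |f s| := rfl
      rw [this, hfs]
      calc |(c₁ s (φ s) - c₂ s (φ s))
          + β * (∑ s', (P₁ s (φ s) s' - P₂ s (φ s) s') * V₂ s')
          + β * (∑ s', P₁ s (φ s) s' * f s')|
          ≤ |c₁ s (φ s) - c₂ s (φ s)|
          + |β * (∑ s', (P₁ s (φ s) s' - P₂ s (φ s) s') * V₂ s')|
          + |β * (∑ s', P₁ s (φ s) s' * f s')| := abs_add_three _ _ _
        _ ≤ εc + β * (εP * ‖V₂‖) + β * D := by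
            rw [abs_mul, abs_mul, abs_of_nonneg hβ0]
            gcongr
        _ = εc + β * εP * ‖V₂‖ + β * D := by ring
    have hnn : 0 ≤ εc + β * εP * ‖V₂‖ + β * D := by positivity
    exact pi_norm_le_iff_of_nonneg hnn |>.mpr hle
  have hβ' : 0 < 1 - β := by linarith
  rw [le_div_iff₀ hβ']
  nlinarith [hKey]
end

section
/- Let S and A be nonempty finite sets, β ∈ [0,1), let c₁, c₂ : S × A → ℝ be two cost functions and P₁, P₂ : S × A → (S → ℝ) two transition kernels. Let V₁ and V₂ solve the respective Bellman optimality equations V_i(s) = min_a ( c_i(s,a) + β ∑_{s'} P_i(s,a)(s') V_i(s') ), let φ : S → A attain the minimum in the equation for V₂, and let V₁^φ be the unique solution of V₁^φ(s) = c₁(s,φ(s)) + β ∑_{s'} P₁(s,φ(s))(s') V₁^φ(s'). Suppose |c₁(s,a) − c₂(s,a)| ≤ ε_c and ∑_{s'} |P₁(s,a)(s') − P₂(s,a)(s')| ≤ ε_P for all (s,a), where ε_c, ε_P ≥ 0. Then ‖V₁^φ − V₁‖∞ ≤ 2 (ε_c + β ε_P ‖V₂‖∞) / (1 − β). In particular,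 with ε_c = ‖c‖∞·L, ε_P = L and ‖V₂‖∞ ≤ ‖c‖∞/(1−β), the performance loss of φ in model 1 satisfies ‖V₁^φ − V₁‖∞ ≤ 2 ‖c‖∞ L / (1 − β)². -/
open scoped BigOperators

lemma robust_kernel_bound {S : Type*} [Fintype S] (p : S → ℝ) (hp0 : ∀ s, 0 ≤ p s)
    (hp1 : ∑ s, p s = 1) (W : S → ℝ) : |∑ s, p s * W s| ≤ ‖W‖ := by
  calc |∑ s, p s * W s| ≤ ∑ s, |p s * W s| := Finset.abs_sum_le_sum_abs _ _
  _ ≤ ∑ s, p s * ‖W‖ := by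
      apply Finset.sum_le_sum
      intro s _
      rw [abs_mul, abs_of_nonneg (hp0 s)]
      exact mul_le_mul_of_nonneg_left
        (by simpa [Real.norm_eq_abs] using norm_le_pi_norm W s) (hp0 s)
  _ = ‖W‖ := by rw [← Finset.sum_mul, hp1, one_mul]

lemma robust_diff_bound {S : Type*} [Fintype S] (p q : S → ℝ) (ε : ℝ)
    (h : ∑ s, |p s - q s| ≤ ε) (W : S → ℝ) :
    |∑ s, (p s - q s) * W s| ≤ ε * ‖W‖ := by
  calc |∑ s, (p s - q s) * W s| ≤ ∑ s, |(p s - q s) * W s| := Finset.abs_sum_le_sum_abs _ _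
  _ ≤ ∑ s, |p s - q s| * ‖W‖ := by
      apply Finset.sum_le_sum
      intro s _
      rw [abs_mul]
      exact mul_le_mul_of_nonneg_left
        (by simpa [Real.norm_eq_abs] using norm_le_pi_norm W s) (abs_nonneg _)
  _ = (∑ s, |p s - q s|) * ‖W‖ := by rw [Finset.sum_mul]
  _ ≤ ε * ‖W‖ := mul_le_mul_of_nonneg_right h (norm_nonneg _)

lemma robust_inf_diff {A : Type*} [Fintype A] [Nonempty A] (f g : A → ℝ) (C : ℝ)
    (h : ∀ a, |f a - g a| ≤ C) : |(⨅ a, f a) - ⨅ a, g a| ≤ C := by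
  have h1 : (⨅ a, f a) - C ≤ ⨅ a, g a := le_ciInf fun a => by
    have h2 := ciInf_le (Finite.bddBelow_range f) a
    have h3 := (abs_sub_le_iff.mp (h a)).1
    linarith
  have h1' : (⨅ a, g a) - C ≤ ⨅ a, f a := le_ciInf fun a => by
    have h2 := ciInf_le (Finite.bddBelow_range g) a
    have h3 := (abs_sub_le_iff.mp (h a)).2
    linarith
  rw [abs_sub_le_iff]; constructor <;> linarith

lemma robust_contract (β M x : ℝ) (hβ1 : β < 1) (h : x ≤ M + β * x) :
    x ≤ M / (1 - β) := by
  rw [le_div_iff₀ (by linarith)]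
  nlinarith

/-- Finite-space core of Theorem 3 (robust_bound): the performance loss of the
approximate model's optimal policy `φ` applied to the true model is at most
`2(ε_c + β ε_P ‖V₂‖∞)/(1-β)`; in particular, with `ε_c = ‖c‖∞ L`, `ε_P = L`
and `‖V₂‖∞ ≤ ‖c‖∞/(1-β)`, it is at most `2‖c‖∞ L/(1-β)²`. -/
theorem robustness_performance_loss_bound
    {S A : Type*} [Fintype S] [Fintype A] [Nonempty S] [Nonempty A]
    (β : ℝ) (hβ0 : 0 ≤ β) (hβ1 : β < 1)
    (c₁ c₂ : S → A → ℝ) (P₁ P₂ : S → A → S → ℝ)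
    (hP₁0 : ∀ s a s', 0 ≤ P₁ s a s') (hP₁1 : ∀ s a, ∑ s', P₁ s a s' = 1)
    (hP₂0 : ∀ s a s', 0 ≤ P₂ s a s') (hP₂1 : ∀ s a, ∑ s', P₂ s a s' = 1)
    (V₁ V₂ : S → ℝ)
    (hV₁ : ∀ s, V₁ s = ⨅ a, (c₁ s a + β * ∑ s', P₁ s a s' * V₁ s'))
    (hV₂ : ∀ s, V₂ s = ⨅ a, (c₂ s a + β * ∑ s', P₂ s a s' * V₂ s'))
    (φ : S → A)
    (hφ : ∀ s, V₂ s = c₂ s (φ s) + β * ∑ s', P₂ s (φ s) s' * V₂ s')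
    (V₁φ : S → ℝ)
    (hV₁φ : ∀ s, V₁φ s = c₁ s (φ s) + β * ∑ s', P₁ s (φ s) s' * V₁φ s')
    (εc εP : ℝ) (hεc0 : 0 ≤ εc) (hεP0 : 0 ≤ εP)
    (hc : ∀ s a, |c₁ s a - c₂ s a| ≤ εc)
    (hP : ∀ s a, ∑ s', |P₁ s a s' - P₂ s a s'| ≤ εP) :
    ‖V₁φ - V₁‖ ≤ 2 * (εc + β * εP * ‖V₂‖) / (1 - β) ∧
    (∀ cnorm L : ℝ, 0 ≤ L → 0 ≤ cnorm → εc = cnorm * L → εP = L →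
      ‖V₂‖ ≤ cnorm / (1 - β) → ‖V₁φ - V₁‖ ≤ 2 * cnorm * L / (1 - β) ^ 2) := by
  have hb : (0:ℝ) < 1 - β := by linarith
  set M : ℝ := εc + β * εP * ‖V₂‖ with hM
  have hM0 : 0 ≤ M := by positivity
  -- generic pointwise bound for a fixed action a
  have hpt : ∀ (W : S → ℝ) (s : S) (a : A),
      |(c₁ s a + β * ∑ s', P₁ s a s' * (W s' + V₂ s')) -
        (c₂ s a + β * ∑ s', P₂ s a s' * V₂ s')| ≤ M + β * ‖W‖ := by
    intro W s a
    have hsplit : (∑ s', P₁ s a s' * (W s' + V₂ s')) - ∑ s', P₂ s a s' * V₂ s' =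
        (∑ s', P₁ s a s' * W s') + ∑ s', (P₁ s a s' - P₂ s a s') * V₂ s' := by
      rw [← Finset.sum_sub_distrib, ← Finset.sum_add_distrib]
      apply Finset.sum_congr rfl
      intro s' _
      ring
    have h1 : |∑ s', P₁ s a s' * W s'| ≤ ‖W‖ :=
      robust_kernel_bound _ (hP₁0 s a) (hP₁1 s a) W
    have h2 : |∑ s', (P₁ s a s' - P₂ s a s') * V₂ s'| ≤ εP * ‖V₂‖ :=
      robust_diff_bound _ _ _ (hP s a) V₂
    have h3 := hc s a
    calc |(c₁ s a + β * ∑ s', P₁ s a s' * (W s' + V₂ s')) -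
        (c₂ s a + β * ∑ s', P₂ s a s' * V₂ s')|
        = |(c₁ s a - c₂ s a) +
            β * ((∑ s', P₁ s a s' * W s') + ∑ s', (P₁ s a s' - P₂ s a s') * V₂ s')| := by
          congr 1
          rw [← hsplit]
          ring
      _ ≤ |c₁ s a - c₂ s a| +
            |β * ((∑ s', P₁ s a s' * W s') + ∑ s', (P₁ s a s' - P₂ s a s') * V₂ s')| :=
          abs_add_le _ _
      _ ≤ εc + β * (‖W‖ + εP * ‖V₂‖) := by
          rw [abs_mul, abs_of_nonneg hβ0]
          have := (abs_add_le (∑ s', P₁ s a s' * W s')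
            (∑ s', (P₁ s a s' - P₂ s a s') * V₂ s')).trans (add_le_add h1 h2)
          nlinarith
      _ = M + β * ‖W‖ := by rw [hM]; ring
  -- bound ‖V₁φ - V₂‖
  have hb1 : ‖V₁φ - V₂‖ ≤ M / (1 - β) := by
    apply robust_contract _ _ _ hβ1
    rw [pi_norm_le_iff_of_nonneg (by positivity)]
    intro s
    have := hpt (V₁φ - V₂) s (φ s)
    simp only [Pi.sub_apply, sub_add_cancel] at this
    rw [← hV₁φ s, ← hφ s] at this
    simpa [Real.norm_eq_abs] using this
  -- bound ‖V₁ - V₂‖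
  have hb2 : ‖V₁ - V₂‖ ≤ M / (1 - β) := by
    apply robust_contract _ _ _ hβ1
    rw [pi_norm_le_iff_of_nonneg (by positivity)]
    intro s
    have key : |V₁ s - V₂ s| ≤ M + β * ‖V₁ - V₂‖ := by
      rw [hV₁ s, hV₂ s]
      apply robust_inf_diff
      intro a
      have := hpt (V₁ - V₂) s a
      simpa [Pi.sub_apply, sub_add_cancel] using this
    simpa [Real.norm_eq_abs] using key
  -- triangle
  have htri : ‖V₁φ - V₁‖ ≤ 2 * M / (1 - β) := by
    have h := norm_sub_le_norm_sub_add_norm_sub V₁φ V₂ V₁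
    have h2 : ‖V₂ - V₁‖ = ‖V₁ - V₂‖ := norm_sub_rev _ _
    have : ‖V₁φ - V₁‖ ≤ M / (1 - β) + M / (1 - β) := by
      rw [h2] at h; linarith
    calc ‖V₁φ - V₁‖ ≤ M / (1 - β) + M / (1 - β) := this
    _ = 2 * M / (1 - β) := by ring
  refine ⟨htri, ?_⟩
  intro cnorm L hL0 hc0 hεcL hεPL hV2
  refine htri.trans ?_
  rw [hM, hεcL, hεPL, div_le_div_iff₀ hb (by positivity)]
  have hx : ‖V₂‖ * (1 - β) ≤ cnorm := by
    rw [← le_div_iff₀ hb]; exact hV2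
  have h5 : β * L * (‖V₂‖ * (1 - β)) ≤ β * L * cnorm :=
    mul_le_mul_of_nonneg_left hx (mul_nonneg hβ0 hL0)
  have h6 : (cnorm * L + β * L * ‖V₂‖) * (1 - β) ≤ cnorm * L := by nlinarith
  nlinarith [mul_le_mul_of_nonneg_right h6 hb.le]
end

section
/- Let S be a nonempty finite set, β ∈ (0,1), ε > 0, and C > 0 with β(C + 1) ≤ C. Let x, x' : S → ℝ and α : S → [0,1], and suppose that for every s ∈ S, |x'(s)| ≤ (1 − α(s)) |x(s)| + α(s) · β · (‖x‖∞ + ε). If ‖x‖∞ ≤ C ε, then ‖x'‖∞ ≤ C ε. -/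
/-- One-step invariance of the `Cε`-ball for the Q-learning error recursion:
if `β(C+1) ≤ C` and each coordinate of `x'` satisfies
`|x' s| ≤ (1-α s)|x s| + α s · β (‖x‖∞ + ε)`, then `‖x‖∞ ≤ Cε` implies
`‖x'‖∞ ≤ Cε`. -/
theorem q_learning_error_ball_invariant
    {S : Type*} [Fintype S] [Nonempty S]
    (β : ℝ) (hβ0 : 0 < β) (hβ1 : β < 1)
    (ε : ℝ) (hε : 0 < ε)
    (C : ℝ) (hC : 0 < C) (hβC : β * (C + 1) ≤ C)
    (x x' : S → ℝ) (α : S → ℝ)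
    (hα0 : ∀ s, 0 ≤ α s) (hα1 : ∀ s, α s ≤ 1)
    (hrec : ∀ s, |x' s| ≤ (1 - α s) * |x s| + α s * β * (‖x‖ + ε))
    (hx : ‖x‖ ≤ C * ε) :
    ‖x'‖ ≤ C * ε := by
  have hCε : 0 ≤ C * ε := le_of_lt (mul_pos hC hε)
  rw [pi_norm_le_iff_of_nonneg hCε]
  intro s
  rw [Real.norm_eq_abs]
  have hxs : |x s| ≤ C * ε := by
    calc |x s| = ‖x s‖ := (Real.norm_eq_abs _).symm
    _ ≤ ‖x‖ := norm_le_pi_norm x s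
    _ ≤ C * ε := hx
  have hβε : β * (‖x‖ + ε) ≤ C * ε := by
    calc β * (‖x‖ + ε) ≤ β * (C * ε + ε) := by
          apply mul_le_mul_of_nonneg_left _ hβ0.le
          linarith
    _ = β * (C + 1) * ε := by ring
    _ ≤ C * ε := mul_le_mul_of_nonneg_right hβC hε.le
  calc |x' s| ≤ (1 - α s) * |x s| + α s * β * (‖x‖ + ε) := hrec s
  _ ≤ (1 - α s) * (C * ε) + α s * (C * ε) := by
      have h1 : (1 - α s) * |x s| ≤ (1 - α s) * (C * ε) :=
        mul_le_mul_of_nonneg_left hxs (by linarith [hα1 s])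
      have h2 : α s * β * (‖x‖ + ε) ≤ α s * (C * ε) := by
        rw [mul_assoc]
        exact mul_le_mul_of_nonneg_left hβε (hα0 s)
      linarith
  _ = C * ε := by ring
end

section
/- Let S be a nonempty finite set, β ∈ (0,1), ε ≥ 0, and let α_k : S → [0,1] (k ∈ ℕ) satisfy ∑_{k} α_k(s) = ∞ for every s ∈ S. Let x_k : S → ℝ be a sequence of functions such that for all k and all s ∈ S, |x_{k+1}(s)| ≤ (1 − α_k(s)) |x_k(s)| + α_k(s) · β · (‖x_k‖∞ + ε). Then limsup_{k → ∞} ‖x_k‖∞ ≤ β ε / (1 − β). -/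
open Filter

/-- Deterministic skeleton of the Q-learning convergence argument: if the error
recursion `|x_{k+1}(s)| ≤ (1-α_k(s))|x_k(s)| + α_k(s) β (‖x_k‖∞ + ε)` holds and
the learning rates sum to infinity at every coordinate, then
`limsup_k ‖x_k‖∞ ≤ βε/(1-β)`. -/
theorem q_learning_error_limsup_bound
    {S : Type*} [Fintype S] [Nonempty S]
    (β : ℝ) (hβ0 : 0 < β) (hβ1 : β < 1)
    (ε : ℝ) (hε : 0 ≤ ε)
    (α : ℕ → S → ℝ)
    (hα0 : ∀ k s, 0 ≤ α k s) (hα1 : ∀ k s, α k s ≤ 1)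
    (hαsum : ∀ s, Tendsto (fun n => ∑ k ∈ Finset.range n, α k s) atTop atTop)
    (x : ℕ → S → ℝ)
    (hrec : ∀ k s, |x (k + 1) s| ≤ (1 - α k s) * |x k s| + α k s * β * (‖x k‖ + ε)) :
    limsup (fun k => ‖x k‖) atTop ≤ β * ε / (1 - β) := by
  set b : ℕ → ℝ := fun k => ‖x k‖ with hbdef
  have hβ1' : (0:ℝ) < 1 - β := by linarith
  have hb0 : ∀ k, 0 ≤ b k := fun k => norm_nonneg _
  have habs : ∀ k s, |x k s| ≤ b k := by
    intro k s
    simpa [Real.norm_eq_abs] using norm_le_pi_norm (x k) s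
  have hle : ∀ (k : ℕ) (r : ℝ), 0 ≤ r → (∀ s, |x k s| ≤ r) → b k ≤ r := by
    intro k r hr h
    exact (pi_norm_le_iff_of_nonneg hr).2 fun s => by
      simpa [Real.norm_eq_abs] using h s
  -- Key lemma: an eventual bound `B` improves to `β(B+ε)+δ`.
  have key : ∀ B : ℝ, 0 ≤ B → (∀ᶠ k in atTop, b k ≤ B) →
      ∀ δ : ℝ, 0 < δ → ∀ᶠ k in atTop, b k ≤ β * (B + ε) + δ := by
    intro B hB hev δ hδ
    obtain ⟨K, hK⟩ := eventually_atTop.1 hev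
    set C := β * (B + ε) with hC
    have hC0 : 0 ≤ C := by positivity
    -- per-coordinate decay
    have hdecay : ∀ s, ∀ k, K ≤ k →
        |x k s| ≤ C + (∏ j ∈ Finset.Ico K k, (1 - α j s)) * B := by
      intro s k hk
      induction k, hk using Nat.le_induction with
      | base =>
        have h1 : |x K s| ≤ B := le_trans (habs K s) (hK K le_rfl)
        simpa using le_trans h1 (by linarith)
      | succ k hk ih =>
        have h1 : (0:ℝ) ≤ 1 - α k s := by linarith [hα1 k s]
        have hP : (0:ℝ) ≤ ∏ j ∈ Finset.Ico K k, (1 - α j s) :=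
          Finset.prod_nonneg fun j _ => by linarith [hα1 j s]
        have h2 : β * (b k + ε) ≤ C := by
          have := hK k hk
          rw [hC]; nlinarith
        have h3 := hrec k s
        rw [Finset.prod_Ico_succ_top hk]
        nlinarith [habs k s, hα0 k s, ih]
    -- the product tends to 0
    have hprod : ∀ s, Tendsto
        (fun k => (∏ j ∈ Finset.Ico K k, (1 - α j s)) * B) atTop (nhds 0) := by
      intro s
      have hsum : Tendsto (fun k => ∑ j ∈ Finset.Ico K k, α j s) atTop atTop := by
        have h1 : Tendsto
            (fun k => (∑ j ∈ Finset.range k, α j s) + -(∑ j ∈ Finset.range K, α j s))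
            atTop atTop :=
          tendsto_atTop_add_const_right atTop _ (hαsum s)
        refine h1.congr' ?_
        filter_upwards [eventually_ge_atTop K] with k hk
        rw [Finset.sum_Ico_eq_sub _ hk]
        ring
      have hexp : Tendsto (fun k => Real.exp (-(∑ j ∈ Finset.Ico K k, α j s)))
          atTop (nhds 0) :=
        Real.tendsto_exp_atBot.comp (tendsto_neg_atBot_iff.2 hsum)
      have hPz : Tendsto (fun k => ∏ j ∈ Finset.Ico K k, (1 - α j s)) atTop (nhds 0) := by
        apply squeeze_zero
        · intro k
          exact Finset.prod_nonneg fun j _ => by linarith [hα1 j s]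
        · intro k
          have : ∏ j ∈ Finset.Ico K k, (1 - α j s)
              ≤ ∏ j ∈ Finset.Ico K k, Real.exp (-(α j s)) := by
            refine Finset.prod_le_prod (fun j _ => by linarith [hα1 j s]) ?_
            intro j _
            have := Real.add_one_le_exp (-(α j s))
            linarith
          calc ∏ j ∈ Finset.Ico K k, (1 - α j s)
              ≤ ∏ j ∈ Finset.Ico K k, Real.exp (-(α j s)) := this
            _ = Real.exp (-(∑ j ∈ Finset.Ico K k, α j s)) := by
                rw [← Real.exp_sum, Finset.sum_neg_distrib]
        · exact hexp
      simpa using hPz.mul_const B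
    have hev2 : ∀ᶠ k in atTop, ∀ s : S, (∏ j ∈ Finset.Ico K k, (1 - α j s)) * B < δ :=
      eventually_all.2 fun s => (hprod s).eventually_lt_const hδ
    filter_upwards [hev2, eventually_ge_atTop K] with k hk1 hk2
    refine hle k _ (by positivity) fun s => ?_
    have := hdecay s k hk2
    have := hk1 s
    linarith
  -- boundedness
  set B₀ : ℝ := max (b 0) (β * ε / (1 - β)) with hB₀def
  have hB₀0 : 0 ≤ B₀ := le_trans (hb0 0) (le_max_left _ _)
  have hfix : β * (B₀ + ε) ≤ B₀ := by
    have h1 : β * ε / (1 - β) ≤ B₀ := le_max_right _ _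
    rw [div_le_iff₀ hβ1'] at h1
    nlinarith
  have hbound : ∀ k, b k ≤ B₀ := by
    intro k
    induction k with
    | zero => exact le_max_left _ _
    | succ k ih =>
      refine hle (k + 1) B₀ hB₀0 fun s => ?_
      have h3 : |x (k + 1) s| ≤ (1 - α k s) * |x k s| + α k s * β * (b k + ε) := hrec k s
      have h4 := habs k s
      have h5 := hα0 k s
      have h6 := hα1 k s
      have h8 : (1 - α k s) * |x k s| ≤ (1 - α k s) * B₀ :=
        mul_le_mul_of_nonneg_left (h4.trans ih) (by linarith)
      have h9 : α k s * β * (b k + ε) ≤ α k s * B₀ := by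
        have h10 : β * (b k + ε) ≤ β * (B₀ + ε) := by nlinarith
        have h11 : α k s * (β * (b k + ε)) ≤ α k s * B₀ :=
          mul_le_mul_of_nonneg_left (h10.trans hfix) h5
        linarith [h11, mul_assoc (α k s) β (b k + ε)]
      linarith
  have hbdd : IsBoundedUnder (· ≤ ·) atTop b :=
    isBoundedUnder_of ⟨B₀, fun k => hbound k⟩
  have hcob : IsCoboundedUnder (· ≤ ·) atTop b :=
    (isBoundedUnder_of ⟨(0:ℝ), fun k => hb0 k⟩ :
      IsBoundedUnder (· ≥ ·) atTop b).isCoboundedUnder_le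
  set L := limsup b atTop with hLdef
  have hL0 : 0 ≤ L :=
    le_limsup_of_frequently_le (Frequently.of_forall fun k => hb0 k) hbdd
  -- L ≤ β (L + ε)
  have hmain : L ≤ β * (L + ε) := by
    refine le_of_forall_pos_le_add fun η hη => ?_
    set δ := η / (2 * (β + 1)) with hδdef
    have hδ : 0 < δ := by positivity
    have hevB : ∀ᶠ k in atTop, b k ≤ L + δ := by
      have hlt : L < L + δ := by linarith
      filter_upwards [eventually_lt_of_limsup_lt hlt hbdd] with k hk
      exact le_of_lt hk
    have h2 := key (L + δ) (by linarith) hevB δ hδ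
    have h3 : L ≤ β * (L + δ + ε) + δ := limsup_le_of_le hcob h2
    have hβδ : β * δ + δ ≤ η := by
      rw [hδdef]
      rw [div_eq_mul_inv]
      have h4 : (0:ℝ) < 2 * (β + 1) := by positivity
      rw [← sub_nonneg]
      have : η - (β * (η * (2 * (β + 1))⁻¹) + η * (2 * (β + 1))⁻¹)
          = η * (β + 1) * (2 * (β + 1))⁻¹ := by
        field_simp
        ring
      rw [this]
      positivity
    nlinarith
  rw [le_div_iff₀ hβ1']
  nlinarith
end

section
/- Let S be a nonempty finite set, β ∈ (0,1), ε ≥ 0, and let α_k : S → [0,1] (k ∈ ℕ). Let x_k : S → ℝ be a sequence of functions such that for all k and all s ∈ S, |x_{k+1}(s)| ≤ (1 − α_k(s)) |x_k(s)| + α_k(s) · β · (‖x_k‖∞ + ε). Then for every k, ‖x_k‖∞ ≤ max( ‖x_0‖∞, β ε / (1 − β) ). -/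
/-- Uniform boundedness of the Q-learning error recursion: if
`|x_{k+1}(s)| ≤ (1-α_k(s))|x_k(s)| + α_k(s) β (‖x_k‖∞ + ε)` for all `k, s`,
then `‖x_k‖∞ ≤ max(‖x₀‖∞, βε/(1-β))` for every `k`. -/
theorem q_learning_error_uniformly_bounded
    {S : Type*} [Fintype S] [Nonempty S]
    (β : ℝ) (hβ0 : 0 < β) (hβ1 : β < 1)
    (ε : ℝ) (hε : 0 ≤ ε)
    (α : ℕ → S → ℝ)
    (hα0 : ∀ k s, 0 ≤ α k s) (hα1 : ∀ k s, α k s ≤ 1)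
    (x : ℕ → S → ℝ)
    (hrec : ∀ k s, |x (k + 1) s| ≤ (1 - α k s) * |x k s| + α k s * β * (‖x k‖ + ε)) :
    ∀ k, ‖x k‖ ≤ max ‖x 0‖ (β * ε / (1 - β)) := by
  set M : ℝ := max ‖x 0‖ (β * ε / (1 - β)) with hM
  have hM0 : 0 ≤ M := le_trans (norm_nonneg _) (le_max_left _ _)
  have hβε : β * ε / (1 - β) ≤ M := le_max_right _ _
  have hkey : β * (M + ε) ≤ M := by
    have h1 : β * ε ≤ (1 - β) * M := by
      rw [div_le_iff₀ (by linarith)] at hβε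
      linarith [hβε]
    nlinarith
  intro k
  induction k with
  | zero => exact le_max_left _ _
  | succ k ih =>
    rw [pi_norm_le_iff_of_nonneg hM0]
    intro s
    have hxs : |x k s| ≤ M := le_trans (norm_le_pi_norm (x k) s) ih
    have h2 : β * (‖x k‖ + ε) ≤ M := le_trans (by nlinarith [norm_nonneg (x k)]) hkey
    calc ‖x (k + 1) s‖ = |x (k + 1) s| := rfl
      _ ≤ (1 - α k s) * |x k s| + α k s * β * (‖x k‖ + ε) := hrec k s
      _ ≤ (1 - α k s) * M + α k s * M := by
          have hA : (1 - α k s) * |x k s| ≤ (1 - α k s) * M :=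
            mul_le_mul_of_nonneg_left hxs (by linarith [hα1 k s])
          have hB : α k s * β * (‖x k‖ + ε) ≤ α k s * M := by
            rw [mul_assoc]
            exact mul_le_mul_of_nonneg_left h2 (hα0 k s)
          linarith
      _ = M := by ring
end
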